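/- arXiv:2311.17617 — 2 statements merged into one kernel-verified Lean document; each statement's English description precedes it below -/
import Mathlib

section
/- Let Γ₁,...,Γ_N be positive reals, κ₁,...,κ_N ≥ 0, and Γ'_i = (1+κ_i²)Γ_i. Then the CSI-assisted AF SNDR Γ^V = (∏_{i=1}^N (1+Γ'_i)/∏_{i=1}^N Γ_i − 1)^{-1} is positive and satisfies Γ^V ≤ 1/(∏_{i=1}^N (1+κ_i²) − 1) whenever the latter product exceeds 1. -/
open Finset

/-
Write `cᵢ = 1 + κᵢ² ≥ 1`. Factorwise `cᵢΓᵢ ≤ 1 + cᵢΓᵢ` and `Γᵢ < 1 + cᵢΓᵢ`, so the ratio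
`r = ∏(1 + cᵢΓᵢ) / ∏Γᵢ` satisfies both `r > 1` (for `N ≥ 1`) and `r ≥ ∏cᵢ`; then
`Γ^V = (r - 1)⁻¹` is positive and antitone in `r`.
-/

section ProdBounds

variable {ι : Type*} {s : Finset ι} {c x : ι → ℝ}

lemma prod_mul_prod_le_prod_one_add_mul (hc : ∀ i ∈ s, 0 ≤ c i) (hx : ∀ i ∈ s, 0 ≤ x i) :
    (∏ i ∈ s, c i) * ∏ i ∈ s, x i ≤ ∏ i ∈ s, (1 + c i * x i) := by
  rw [← prod_mul_distrib]
  exact prod_le_prod (fun i hi => mul_nonneg (hc i hi) (hx i hi)) fun i _ => by linarith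

lemma prod_lt_prod_one_add_mul (hs : s.Nonempty) (hc : ∀ i ∈ s, 1 ≤ c i)
    (hx : ∀ i ∈ s, 0 < x i) : ∏ i ∈ s, x i < ∏ i ∈ s, (1 + c i * x i) :=
  prod_lt_prod_of_nonempty hx (fun i hi => by nlinarith [hc i hi, hx i hi]) hs

end ProdBounds

lemma inv_sub_one_le_one_div_sub_one {K r : ℝ} (hK : 1 < K) (hKr : K ≤ r) :
    (r - 1)⁻¹ ≤ 1 / (K - 1) := by
  rw [one_div]
  exact inv_anti₀ (sub_pos.mpr hK) (sub_le_sub_right hKr 1)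

theorem stmt_3_general (N : ℕ) (hN : 1 ≤ N) (Γ κ : Fin N → ℝ) (hΓ : ∀ i, 0 < Γ i) :
    0 < ((∏ i : Fin N, (1 + (1 + κ i ^ 2) * Γ i)) / (∏ i : Fin N, Γ i) - 1)⁻¹ ∧
      ((1 : ℝ) < ∏ i : Fin N, (1 + κ i ^ 2) →
        ((∏ i : Fin N, (1 + (1 + κ i ^ 2) * Γ i)) / (∏ i : Fin N, Γ i) - 1)⁻¹ ≤
          1 / ((∏ i : Fin N, (1 + κ i ^ 2)) - 1)) := by
  have hc : ∀ i ∈ (univ : Finset (Fin N)), 1 ≤ 1 + κ i ^ 2 := fun i _ => by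
    linarith [sq_nonneg (κ i)]
  have hΓprod : 0 < ∏ i : Fin N, Γ i := prod_pos fun i _ => hΓ i
  have hne : (univ : Finset (Fin N)).Nonempty := univ_nonempty_iff.mpr ⟨⟨0, hN⟩⟩
  have hr_gt_one : 1 < (∏ i : Fin N, (1 + (1 + κ i ^ 2) * Γ i)) / ∏ i : Fin N, Γ i :=
    (one_lt_div hΓprod).mpr (prod_lt_prod_one_add_mul hne hc fun i _ => hΓ i)
  refine ⟨inv_pos.mpr (sub_pos.mpr hr_gt_one), fun hK => ?_⟩
  refine inv_sub_one_le_one_div_sub_one hK ((le_div_iff₀ hΓprod).mpr ?_)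
  exact prod_mul_prod_le_prod_one_add_mul (fun i hi => zero_le_one.trans (hc i hi))
    fun i _ => (hΓ i).le

/-- The CSI-assisted AF SNDR Γ^V = (∏(1+Γ'_i)/∏Γ_i − 1)⁻¹ with Γ'_i = (1+κ_i²)Γ_i is
positive, and Γ^V ≤ 1/(∏(1+κ_i²) − 1) whenever ∏(1+κ_i²) > 1. -/
theorem stmt_3 (N : ℕ) (hN : 1 ≤ N) (Γ κ : Fin N → ℝ) (hΓ : ∀ i, 0 < Γ i) (hκ : ∀ i, 0 ≤ κ i) :
    0 < ((∏ i : Fin N, (1 + (1 + κ i ^ 2) * Γ i)) / (∏ i : Fin N, Γ i) - 1)⁻¹ ∧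
      ((1 : ℝ) < ∏ i : Fin N, (1 + κ i ^ 2) →
        ((∏ i : Fin N, (1 + (1 + κ i ^ 2) * Γ i)) / (∏ i : Fin N, Γ i) - 1)⁻¹ ≤
          1 / ((∏ i : Fin N, (1 + κ i ^ 2)) - 1)) :=
  stmt_3_general N hN Γ κ hΓ
end

section
/- For positive reals Γ₁,...,Γ_N, constants d₁ ≥ 0, λ_i ≥ 1, C_{R_i} > 0 with λ_{N+1} = 1 and C_{R_0} = 1, the N-hop FG AF SNDR Γ^F = (d₁ + ∑_{i=1}^N λ_{i+1} ∏_{j=1}^i C_{R_{j−1}}/Γ_j)^{-1} satisfies the recursion Γ^F_{n,...,N} = (d_n + λ_{n,n+1}/Γ_n + C_{R_n}/(Γ_n Γ^F_{n+1,...,N}))^{-1} for 1 ≤ n ≤ N−2, where λ_{n,n+1} = λ_{n+1} + C_{R_n}(1 − λ_{n+1}), d_n = λ_n − 1, Γ^F_{n+1,...,N} = (d_{n+1} + ∑_{i=n+1}^N λ_{i+1} ∏_{j=n+2}^i C_{R_{j−1}} / ∏_{j=n+1}^i Γ_j)^{-1}. -/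
/-!
Peel the first hop off the sum defining `1 / Γ^F_{n,…,N}`: the term `i = n` is `λ_{n+1} / Γ_n`,
and every other term carries the factor `C_{R_n} / Γ_n` in front of the corresponding term of the
`(n+1)`-hop sum, which equals `1 / Γ^F_{n+1,…,N} − d_{n+1}`. Substituting `d_{n+1} = λ_{n+1} − 1`
gives the coefficient `λ_{n,n+1}` of `1 / Γ_n`.
-/

open Finset

section

variable {K : Type*} [Field K]

/-- `(Γ^F_{n,…,N})⁻¹ = d_n + afTailSum N lam C Γ n`, with `C (j - 1)` standing for `C_{R_{j-1}}`. -/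
def afTailSum (N : ℕ) (lam C Γ : ℕ → K) (n : ℕ) : K :=
  ∑ i ∈ Icc n N, lam (i + 1) * (∏ j ∈ Icc (n + 1) i, C (j - 1)) / ∏ j ∈ Icc n i, Γ j

lemma afTailSum_eq_add_mul_afTailSum_add_one {N n : ℕ} (h : n ≤ N) (lam C Γ : ℕ → K) :
    afTailSum N lam C Γ n = lam (n + 1) / Γ n + C n / Γ n * afTailSum N lam C Γ (n + 1) := by
  rw [afTailSum, ← add_sum_Ioc_eq_sum_Icc h, ← Icc_add_one_left_eq_Ioc, Icc_self,
    Icc_eq_empty (by omega), afTailSum, mul_sum, prod_singleton, prod_empty, mul_one]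
  congr 1
  refine sum_congr rfl fun i hi => ?_
  have hni : n + 1 ≤ i := (mem_Icc.mp hi).1
  rw [← mul_prod_Ioc_eq_prod_Icc hni, ← mul_prod_Ioc_eq_prod_Icc (by omega : n ≤ i),
    Nat.add_sub_cancel, ← Icc_add_one_left_eq_Ioc, ← Icc_add_one_left_eq_Ioc]
  ring

end

theorem stmt_14_general (N : ℕ) (Γ C : ℕ → ℝ)
    (lam : ℕ → ℝ)
    (d : ℕ → ℝ) (hd : ∀ i, d i = lam i - 1)
    (GF : ℕ → ℝ)
    (hGF : ∀ n, GF n =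
      (d n + ∑ i ∈ Finset.Icc n N, lam (i + 1) *
          (∏ j ∈ Finset.Icc (n + 1) i, C (j - 1)) / (∏ j ∈ Finset.Icc n i, Γ j))⁻¹)
    (n : ℕ) (hn2 : n ≤ N - 2) :
    GF n = (d n + (lam (n + 1) + C n * (1 - lam (n + 1))) / Γ n +
        C n / (Γ n * GF (n + 1)))⁻¹ := by
  have hGF' : ∀ m, GF m = (d m + afTailSum N lam C Γ m)⁻¹ := hGF
  rw [hGF' n, hGF' (n + 1), afTailSum_eq_add_mul_afTailSum_add_one (by omega), hd (n + 1)]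
  simp only [div_eq_mul_inv, mul_inv, inv_inv]
  ring

/-- Recursion for the N-hop FG AF SNDR: with λ_i = ∏_{j=i}^N (1+κ_j²), d_i = λ_i − 1,
C_{R_0} = 1, and Γ^F_{n,...,N} = (d_n + ∑_{i=n}^N λ_{i+1} (∏_{j=n+1}^i C_{R_{j−1}})
/ (∏_{j=n}^i Γ_j))⁻¹, one has, for 1 ≤ n ≤ N−2,
Γ^F_{n,...,N} = (d_n + λ_{n,n+1}/Γ_n + C_{R_n}/(Γ_n Γ^F_{n+1,...,N}))⁻¹
with λ_{n,n+1} = λ_{n+1} + C_{R_n}(1 − λ_{n+1}). -/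
theorem stmt_14 (N : ℕ) (κ Γ C : ℕ → ℝ)
    (hκ : ∀ j, 0 ≤ κ j) (hΓ : ∀ j, 0 < Γ j) (hC : ∀ j, 0 < C j) (hC0 : C 0 = 1)
    (lam : ℕ → ℝ) (hlam : ∀ i, lam i = ∏ j ∈ Finset.Icc i N, (1 + κ j ^ 2))
    (d : ℕ → ℝ) (hd : ∀ i, d i = lam i - 1)
    (GF : ℕ → ℝ)
    (hGF : ∀ n, GF n =
      (d n + ∑ i ∈ Finset.Icc n N, lam (i + 1) *
          (∏ j ∈ Finset.Icc (n + 1) i, C (j - 1)) / (∏ j ∈ Finset.Icc n i, Γ j))⁻¹)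
    (n : ℕ) (hn1 : 1 ≤ n) (hn2 : n ≤ N - 2) :
    GF n = (d n + (lam (n + 1) + C n * (1 - lam (n + 1))) / Γ n +
        C n / (Γ n * GF (n + 1)))⁻¹ :=
  stmt_14_general N Γ C lam d hd GF hGF n hn2
end
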